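/- Let F have characteristic 0 or p ≥ m, m > 1, and let g = ⟨x⟩ ⋉ a with a abelian and ad x diagonalizable on a. Suppose 1 is an eigenvalue of ad x on a with eigenvector v, and let α ∈ F and linear functionals f^i : a(i) → F for 0 ≤ i < m with f^1(v) = 1, where a(δ) is the δ-eigenspace of ad x. Then the linear map R : g → gl(m,F) given by R(x) = D = diag(α, α−1, ..., α−(m−1)), R(u) = f^i(u) J^i for u ∈ a(i) (0 ≤ i < m), and R(u) = 0 for u ∈ a(δ) with δ ∉ {0, 1, ..., m−1}, is a Lie algebra homomorphism, and the resulting g-module F^m is uniserial of composition length m, with [g,g] acting by nonzero nilpotent operators. -/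

import Mathlib

/-!
Each `R u` with `u ∈ a` lies in the commutative algebra `F[J]`, and on the weight space `a(δ)`
commuting with `D = R x` multiplies by `δ`, because `D J^i - J^i D = i J^i`. As `g = F x + a` with
`a` abelian, this makes `R` bracket-preserving. All `R y` are upper triangular, so commutators are
strictly upper triangular and `R` sends `[g, g]` to nilpotent matrices, while `R [x, v] = R v = J`
is nonzero. The subspaces invariant under `J = R v` alone are already the `m + 1` coordinate flags
`span {e₀, …, e_(k-1)}`, and these are invariant under every upper triangular matrix.
-/

def jordanBlock {F : Type*} [Field F] (m : ℕ) (α : F) :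
    Matrix (Fin m) (Fin m) F :=
  fun i j => if (i : ℕ) + 1 = (j : ℕ) then 1 else if i = j then α else 0

open Matrix

section JordanBlock

variable {F : Type*} [Field F] {m : ℕ}

lemma jordanBlock_zero_pow_apply (k : ℕ) (i j : Fin m) :
    (jordanBlock m (0 : F) ^ k) i j = if (i : ℕ) + k = j then 1 else 0 := by
  induction k generalizing j with
  | zero => simp [one_apply, Fin.ext_iff]
  | succ k ih =>
    rcases j with ⟨_ | j, hj⟩
    · simp [pow_succ, mul_apply, jordanBlock]
    · rw [pow_succ, mul_apply, Finset.sum_eq_single ⟨j, by omega⟩]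
      · simp [ih, jordanBlock, ← add_assoc]
      · intro l _ hl
        simp [jordanBlock, Fin.ext_iff] at hl ⊢
        omega
      · simp

lemma jordanBlock_zero_isUpperTriangular : (jordanBlock m (0 : F)).IsUpperTriangular := by
  intro i j (hij : j < i)
  simp [jordanBlock, hij.ne']
  omega

lemma jordanBlock_zero_ne_zero (hm : 1 < m) : jordanBlock m (0 : F) ≠ 0 := by
  intro h
  simpa [jordanBlock] using congrFun (congrFun h ⟨0, by omega⟩) ⟨1, hm⟩

lemma diagonal_commutator_smul_jordanBlock_zero_pow (α c : F) (k : ℕ) :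
    diagonal (fun i : Fin m => α - (i : ℕ)) * (c • jordanBlock m (0 : F) ^ k) -
      c • jordanBlock m (0 : F) ^ k * diagonal (fun i : Fin m => α - (i : ℕ)) =
      (k : F) • c • jordanBlock m (0 : F) ^ k := by
  ext i j
  simp only [Matrix.sub_apply, diagonal_mul, mul_diagonal, Matrix.smul_apply,
    jordanBlock_zero_pow_apply, smul_eq_mul]
  split_ifs with h
  · rw [← h]; push_cast; ring
  · simp

lemma jordanBlock_zero_pow_mulVec_apply (s : ℕ) (f : Fin m → F) (j : Fin m) :
    (jordanBlock m (0 : F) ^ s *ᵥ f) j =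
      if h : (j : ℕ) + s < m then f ⟨j + s, h⟩ else 0 := by
  rw [mulVec, dotProduct]
  split_ifs with h
  · rw [Finset.sum_eq_single ⟨j + s, h⟩]
    · simp [jordanBlock_zero_pow_apply]
    · intro l _ hl
      simp [jordanBlock_zero_pow_apply, Fin.ext_iff] at hl ⊢
      omega
    · simp
  · refine Finset.sum_eq_zero fun l _ => ?_
    simp [jordanBlock_zero_pow_apply]
    omega

end JordanBlock

section UpperTriangular

variable {R n : Type*} [CommRing R] [Fintype n] [LinearOrder n]

lemma Matrix.IsUpperTriangular.mul_apply_self {A B : Matrix n n R} (hA : A.IsUpperTriangular)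
    (hB : B.IsUpperTriangular) (i : n) : (A * B) i i = A i i * B i i := by
  rw [mul_apply, Finset.sum_eq_single i]
  intro k _ hki
  rcases hki.lt_or_gt with h | h
  · rw [hA h, zero_mul]
  · rw [hB h, mul_zero]
  · simp

variable (R n) in
def Matrix.strictUpperTriangular : Submodule R (Matrix n n R) :=
  Subalgebra.toSubmodule (blockTriangularSubalgebra R R id) ⊓ LinearMap.ker (diagLinearMap n R R)

lemma Matrix.IsUpperTriangular.commutator_mem_strictUpperTriangular {A B : Matrix n n R}
    (hA : A.IsUpperTriangular) (hB : B.IsUpperTriangular) :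
    A * B - B * A ∈ strictUpperTriangular R n := by
  refine ⟨(hA.mul hB).sub (hB.mul hA), ?_⟩
  ext i
  simp [hA.mul_apply_self hB, hB.mul_apply_self hA, mul_comm]

lemma Matrix.isNilpotent_of_mem_strictUpperTriangular {M : Matrix n n R}
    (hM : M ∈ strictUpperTriangular R n) : IsNilpotent M := by
  obtain ⟨hUT, hdiag⟩ := hM
  have hcharpoly : M.charpoly = Polynomial.X ^ Fintype.card n := by
    have hzero (i : n) : M i i = 0 := congrFun (LinearMap.mem_ker.1 hdiag) i
    simp [charpoly_of_isUpperTriangular M hUT, hzero]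
  exact ⟨Fintype.card n, by simpa [hcharpoly] using aeval_self_charpoly M⟩

end UpperTriangular

section Flag

variable {F : Type*} [Field F] {m : ℕ}

variable (F m) in
def flag (k : ℕ) : Submodule F (Fin m → F) where
  carrier := {f | ∀ j : Fin m, k ≤ j → f j = 0}
  add_mem' hf hg j hj := by simp [hf j hj, hg j hj]
  zero_mem' _ _ := rfl
  smul_mem' c _ hf j hj := by simp [hf j hj]

lemma mem_flag {k : ℕ} {f : Fin m → F} :
    f ∈ flag F m k ↔ ∀ j : Fin m, k ≤ j → f j = 0 :=
  Iff.rfl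

lemma flag_zero : flag F m 0 = ⊥ :=
  eq_bot_iff.2 fun _ hf => funext fun j => hf j j.val.zero_le

lemma flag_mono : Monotone (flag F m) :=
  fun _ _ hkl _ hf j hj => hf j (hkl.trans hj)

lemma flag_strictMonoOn : StrictMonoOn (flag F m) (Set.Iic m) := by
  intro k _ l (hl : l ≤ m) hkl
  refine (flag_mono hkl.le).lt_of_ne fun h => ?_
  have hk : k < m := hkl.trans_le hl
  have hmem : Pi.single (⟨k, hk⟩ : Fin m) (1 : F) ∈ flag F m l := fun j hj =>
    Pi.single_eq_of_ne (fun hjk => by simp [hjk] at hj; omega) _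
  rw [← h] at hmem
  simpa using hmem ⟨k, hk⟩ le_rfl

lemma Matrix.IsUpperTriangular.mulVec_mem_flag {M : Matrix (Fin m) (Fin m) F}
    (hM : M.IsUpperTriangular) {k : ℕ} {f : Fin m → F} (hf : f ∈ flag F m k) :
    M *ᵥ f ∈ flag F m k := by
  intro j hj
  rw [mulVec, dotProduct]
  refine Finset.sum_eq_zero fun l _ => ?_
  rcases lt_or_ge (l : ℕ) k with hl | hl
  · rw [hM (show l < j by omega), zero_mul]
  · rw [hf l hl, mul_zero]

lemma flag_succ_le_flag_sup_span {t : Fin m} {g : Fin m → F} (hg : g ∈ flag F m (t + 1))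
    (hgt : g t ≠ 0) : flag F m (t + 1) ≤ flag F m t ⊔ Submodule.span F {g} := by
  intro w hw
  refine Submodule.mem_sup.2 ⟨w - (w t / g t) • g, fun j hj => ?_, (w t / g t) • g,
    Submodule.smul_mem _ _ (Submodule.mem_span_singleton_self g), sub_add_cancel w _⟩
  rcases hj.eq_or_lt with hjt | hjt
  · rw [← Fin.ext hjt]
    simp [hgt]
  · simp [hw j hjt, hg j hjt]

lemma flag_le_of_jordanBlock_invariant {W : Submodule F (Fin m → F)}
    (hW : W.map (toLin' (jordanBlock m (0 : F))) ≤ W) {f : Fin m → F} (hfW : f ∈ W)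
    {j : Fin m} (hf : f ∈ flag F m (j + 1)) (hfj : f j ≠ 0) : flag F m (j + 1) ≤ W := by
  have hpow (s : ℕ) : jordanBlock m (0 : F) ^ s *ᵥ f ∈ W := by
    induction s with
    | zero => simpa using hfW
    | succ s ih =>
      rw [pow_succ', ← mulVec_mulVec]
      exact hW ⟨_, ih, toLin'_apply _ _⟩
  suffices ∀ t ≤ (j : ℕ) + 1, flag F m t ≤ W from this _ le_rfl
  intro t
  induction t with
  | zero => simp [flag_zero]
  | succ t ih =>
    intro ht
    have htm : t < m := by omega
    -- shifting `f` down by `j - t` places its last nonzero entry at position `t`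
    set g := jordanBlock m (0 : F) ^ (j - t) *ᵥ f
    have hg : g ∈ flag F m (t + 1) := fun i hi => by
      simp only [g, jordanBlock_zero_pow_mulVec_apply]
      split_ifs
      · exact hf _ (by simp; omega)
      · rfl
    have hgt : g ⟨t, htm⟩ ≠ 0 := by
      simp only [g, jordanBlock_zero_pow_mulVec_apply]
      rw [dif_pos (by omega)]
      convert hfj using 2
      ext
      simp only
      omega
    exact (flag_succ_le_flag_sup_span hg hgt).trans
      (sup_le (ih (by omega)) ((Submodule.span_singleton_le_iff_mem _ _).2 (hpow _)))

lemma exists_eq_flag_of_jordanBlock_invariant {W : Submodule F (Fin m → F)}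
    (hW : W.map (toLin' (jordanBlock m (0 : F))) ≤ W) : ∃ k ≤ m, W = flag F m k := by
  classical
  have htop : W ≤ flag F m m := fun f _ j hj => absurd j.isLt (by omega)
  have hex : ∃ k, W ≤ flag F m k := ⟨m, htop⟩
  refine ⟨Nat.find hex, Nat.find_min' hex htop, (Nat.find_spec hex).antisymm ?_⟩
  rcases hk : Nat.find hex with _ | j
  · simp [flag_zero]
  · obtain ⟨f, hfW, hf⟩ :=
      SetLike.not_le_iff_exists.1 (Nat.find_min hex (show j < Nat.find hex by omega))
    obtain ⟨i, hji, hfi⟩ : ∃ i : Fin m, j ≤ i ∧ f i ≠ 0 := by simpa [mem_flag] using hf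
    have hf' : f ∈ flag F m (j + 1) := hk ▸ Nat.find_spec hex hfW
    obtain rfl : (i : ℕ) = j := by
      by_contra h
      exact hfi (hf' i (by omega))
    exact flag_le_of_jordanBlock_invariant hW hfW hf' hfi

lemma setOf_map_le_eq_image_flag {ι : Type*} (ρ : ι → Matrix (Fin m) (Fin m) F)
    (hρ : ∀ y, (ρ y).IsUpperTriangular) {y₀ : ι} (hy₀ : ρ y₀ = jordanBlock m 0) :
    {W : Submodule F (Fin m → F) | ∀ y, W.map (toLin' (ρ y)) ≤ W} =
      flag F m '' Set.Iic m := by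
  ext W
  constructor
  · intro hW
    obtain ⟨k, hk, rfl⟩ := exists_eq_flag_of_jordanBlock_invariant (hy₀ ▸ hW y₀)
    exact ⟨k, hk, rfl⟩
  · rintro ⟨k, -, rfl⟩ y _ ⟨f, hf, rfl⟩
    exact (hρ y).mulVec_mem_flag hf

lemma isChain_image_flag : IsChain (· ≤ ·) (flag F m '' Set.Iic m) :=
  flag_mono.isChain_image (isChain_of_trichotomous _)

lemma ncard_image_flag : (flag F m '' Set.Iic m).ncard = m + 1 := by
  rw [flag_strictMonoOn.injOn.ncard_image, Set.ncard_Iic_nat]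

end Flag

section LieAlgebra

variable {F L A : Type*} [CommRing F] [LieRing L] [LieAlgebra F L] [Ring A] [Algebra F A]

lemma map_lie_of_span_sup_eq_top (R : L →ₗ[F] A) {x : L} {a : Submodule F L}
    (hspan : Submodule.span F {x} ⊔ a = ⊤) (habel : ∀ u ∈ a, ∀ w ∈ a, ⁅u, w⁆ = 0)
    (hx : ∀ u ∈ a, R ⁅x, u⁆ = R x * R u - R u * R x)
    (hcomm : ∀ u ∈ a, ∀ w ∈ a, Commute (R u) (R w)) (y z : L) :
    R ⁅y, z⁆ = R y * R z - R z * R y := by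
  have hdec (y : L) : ∃ c : F, ∃ u ∈ a, c • x + u = y := by
    obtain ⟨_, hp, u, hu, rfl⟩ := Submodule.mem_sup.1 (hspan ▸ Submodule.mem_top : y ∈ _)
    obtain ⟨c, rfl⟩ := Submodule.mem_span_singleton.1 hp
    exact ⟨c, u, hu, rfl⟩
  obtain ⟨c, u, hu, rfl⟩ := hdec y
  obtain ⟨d, w, hw, rfl⟩ := hdec z
  have hux : R ⁅u, x⁆ = R u * R x - R x * R u := by rw [← lie_skew, map_neg, hx u hu, neg_sub]
  simp only [add_lie, lie_add, smul_lie, lie_smul, map_add, map_smul, lie_self, hx w hw, hux,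
    habel u hu w hw, smul_zero, map_zero, add_mul, mul_add, smul_mul_assoc, mul_smul_comm,
    (hcomm u hu w hw).eq]
  module

lemma map_lie_of_iSup_inf_eigenspace_eq (R : L →ₗ[F] A) {x : L} {a : Submodule F L}
    (hsup : ⨆ δ : F, a ⊓ Module.End.eigenspace (LieAlgebra.ad F L x : L →ₗ[F] L) δ = a)
    (h : ∀ δ, ∀ u ∈ a ⊓ Module.End.eigenspace (LieAlgebra.ad F L x : L →ₗ[F] L) δ,
      δ • R u = R x * R u - R u * R x) :
    ∀ u ∈ a, R ⁅x, u⁆ = R x * R u - R u * R x := by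
  intro u hu
  rw [← hsup] at hu
  refine Submodule.iSup_induction _ (motive := fun u => R ⁅x, u⁆ = R x * R u - R u * R x) hu
    (fun δ u hu => ?_) (by simp) (fun u w hu hw => ?_)
  · have hxu : ⁅x, u⁆ = δ • u := by
      simpa using Module.End.mem_eigenspace_iff.1 (Submodule.mem_inf.1 hu).2
    rw [hxu, map_smul, h δ u hu]
  · simp only [lie_add, map_add, hu, hw, mul_add, add_mul]
    abel

lemma isUpperTriangular_of_span_sup_eq_top {n : Type*} [Fintype n] [LinearOrder n]
    (R : L →ₗ[F] Matrix n n F) {x : L} {a : Submodule F L}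
    (hspan : Submodule.span F {x} ⊔ a = ⊤)
    (hx : (R x).IsUpperTriangular) (ha : ∀ u ∈ a, (R u).IsUpperTriangular) (y : L) :
    (R y).IsUpperTriangular := by
  have : Submodule.span F {x} ⊔ a ≤
      (Subalgebra.toSubmodule (blockTriangularSubalgebra F F id)).comap R :=
    sup_le ((Submodule.span_singleton_le_iff_mem _ _).2 hx) ha
  exact this (hspan ▸ Submodule.mem_top)

lemma isNilpotent_of_mem_derived {n : Type*} [Fintype n] [LinearOrder n]
    (R : L →ₗ[F] Matrix n n F) (hR : ∀ y z, R ⁅y, z⁆ = R y * R z - R z * R y)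
    (hUT : ∀ y, (R y).IsUpperTriangular) {y : L}
    (hy : y ∈ ⁅(⊤ : LieIdeal F L), (⊤ : LieIdeal F L)⁆) : IsNilpotent (R y) := by
  refine isNilpotent_of_mem_strictUpperTriangular (?_ : y ∈ (strictUpperTriangular F n).comap R)
  rw [← LieSubmodule.mem_toSubmodule, LieSubmodule.lieIdeal_oper_eq_linear_span'] at hy
  refine Submodule.span_le.2 ?_ hy
  rintro _ ⟨y, -, z, -, rfl⟩
  rw [SetLike.mem_coe, Submodule.mem_comap, hR]
  exact (hUT y).commutator_mem_strictUpperTriangular (hUT z)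

end LieAlgebra

theorem stmt19_general {F L : Type*} [Field F]
    [LieRing L] [LieAlgebra F L]
    {m : ℕ} (hm : 1 < m)
    (x : L) (a : LieIdeal F L)
    (habel : ∀ y ∈ a, ∀ z ∈ a, ⁅y, z⁆ = (0 : L))
    (hspan : Submodule.span F {x} ⊔ (a : Submodule F L) = ⊤)
    (α : F) (v : L) (fi : ℕ → (L →ₗ[F] F))
    (R : L →ₗ[F] Matrix (Fin m) (Fin m) F) :
    letI J : Matrix (Fin m) (Fin m) F := jordanBlock m 0
    letI D : Matrix (Fin m) (Fin m) F :=
      Matrix.diagonal (fun i : Fin m => α - (i : ℕ))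
    letI aδ : F → Submodule F L := fun δ =>
      (a : Submodule F L) ⊓
        Module.End.eigenspace ((LieAlgebra.ad F L x) : L →ₗ[F] L) δ
    -- ad x acts diagonalizably on a
    (⨆ δ : F, aδ δ) = (a : Submodule F L) →
    -- v is an eigenvector of ad x with eigenvalue 1, and f^1(v) = 1
    v ≠ 0 → v ∈ aδ 1 → fi 1 v = 1 →
    -- the defining equations for R
    R x = D →
    (∀ i : ℕ, i < m → ∀ u ∈ aδ (i : F), R u = fi i u • J ^ i) →
    (∀ δ : F, (∀ i : ℕ, i < m → (i : F) ≠ δ) → ∀ u ∈ aδ δ, R u = 0) →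
    -- conclusions
    ((∀ y z : L, R ⁅y, z⁆ = R y * R z - R z * R y) ∧
      IsChain (· ≤ ·) {W : Submodule F (Fin m → F) |
        ∀ y : L, W.map (Matrix.toLin' (R y)) ≤ W} ∧
      {W : Submodule F (Fin m → F) |
        ∀ y : L, W.map (Matrix.toLin' (R y)) ≤ W}.ncard = m + 1 ∧
      (∀ y ∈ ⁅(⊤ : LieIdeal F L), (⊤ : LieIdeal F L)⁆, IsNilpotent (R y)) ∧
      (∃ y ∈ ⁅(⊤ : LieIdeal F L), (⊤ : LieIdeal F L)⁆, R y ≠ 0)) := by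
  intro hsup _ hv hfv hRx hRi hR0
  set J := jordanBlock m (0 : F)
  have hweight (δ : F) (u : L)
      (hu : u ∈ (a : Submodule F L) ⊓
        Module.End.eigenspace (LieAlgebra.ad F L x : L →ₗ[F] L) δ) :
      R u ∈ Algebra.adjoin F {J} ∧ δ • R u = R x * R u - R u * R x := by
    by_cases hδ : ∃ i < m, (i : F) = δ
    · obtain ⟨i, him, rfl⟩ := hδ
      rw [hRi i him u hu, hRx, diagonal_commutator_smul_jordanBlock_zero_pow]
      exact ⟨Subalgebra.smul_mem _
        (Subalgebra.pow_mem _ (Algebra.self_mem_adjoin_singleton F J) i) _, rfl⟩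
    · simp [hR0 δ (fun i hi h => hδ ⟨i, hi, h⟩) u hu]
  have hadjoin : (a : Submodule F L) ≤ (Subalgebra.toSubmodule (Algebra.adjoin F {J})).comap R :=
    hsup ▸ iSup_le fun δ u hu => (hweight δ u hu).1
  have hlie := map_lie_of_span_sup_eq_top R hspan habel
    (map_lie_of_iSup_inf_eigenspace_eq R hsup fun δ u hu => (hweight δ u hu).2)
    fun u hu w hw => Algebra.commute_of_mem_adjoin_singleton_of_commute (hadjoin hw)
      (Algebra.commute_of_mem_adjoin_self (hadjoin hu)).symm
  have hUT := isUpperTriangular_of_span_sup_eq_top R hspan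
    (by rw [hRx]; exact blockTriangular_diagonal _)
    fun u hu => Algebra.adjoin_le (S := blockTriangularSubalgebra F F id)
      (Set.singleton_subset_iff.2 jordanBlock_zero_isUpperTriangular) (hadjoin hu)
  have hRv : R v = J := by rw [hRi 1 hm v (by simpa using hv), hfv, one_smul, pow_one]
  have hinv := setOf_map_le_eq_image_flag R hUT hRv
  have hxv : ⁅x, v⁆ = v := by simpa using Module.End.mem_eigenspace_iff.1 hv.2
  refine ⟨hlie, hinv ▸ isChain_image_flag, hinv ▸ ncard_image_flag,
    fun y hy => isNilpotent_of_mem_derived R hlie hUT hy, v, ?_,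
    hRv ▸ jordanBlock_zero_ne_zero hm⟩
  rw [← hxv]
  exact LieSubmodule.lie_mem_lie (LieSubmodule.mem_top x) (LieSubmodule.mem_top v)

theorem stmt19 {F L : Type*} [Field F] [IsAlgClosed F]
    [LieRing L] [LieAlgebra F L] [Module.Finite F L]
    {m : ℕ} (hm : 1 < m)
    (hchar : ringChar F = 0 ∨ ((ringChar F).Prime ∧ m ≤ ringChar F))
    (x : L) (a : LieIdeal F L)
    (habel : ∀ y ∈ a, ∀ z ∈ a, ⁅y, z⁆ = (0 : L))
    (hspan : Submodule.span F {x} ⊔ (a : Submodule F L) = ⊤)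
    (α : F) (v : L) (fi : ℕ → (L →ₗ[F] F))
    (R : L →ₗ[F] Matrix (Fin m) (Fin m) F) :
    letI J : Matrix (Fin m) (Fin m) F := jordanBlock m 0
    letI D : Matrix (Fin m) (Fin m) F :=
      Matrix.diagonal (fun i : Fin m => α - (i : ℕ))
    letI aδ : F → Submodule F L := fun δ =>
      (a : Submodule F L) ⊓
        Module.End.eigenspace ((LieAlgebra.ad F L x) : L →ₗ[F] L) δ
    -- ad x acts diagonalizably on a
    (⨆ δ : F, aδ δ) = (a : Submodule F L) →
    -- v is an eigenvector of ad x with eigenvalue 1, and f^1(v) = 1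
    v ≠ 0 → v ∈ aδ 1 → fi 1 v = 1 →
    -- the defining equations for R
    R x = D →
    (∀ i : ℕ, i < m → ∀ u ∈ aδ (i : F), R u = fi i u • J ^ i) →
    (∀ δ : F, (∀ i : ℕ, i < m → (i : F) ≠ δ) → ∀ u ∈ aδ δ, R u = 0) →
    -- conclusions
    ((∀ y z : L, R ⁅y, z⁆ = R y * R z - R z * R y) ∧
      IsChain (· ≤ ·) {W : Submodule F (Fin m → F) |
        ∀ y : L, W.map (Matrix.toLin' (R y)) ≤ W} ∧
      {W : Submodule F (Fin m → F) |
        ∀ y : L, W.map (Matrix.toLin' (R y)) ≤ W}.ncard = m + 1 ∧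
      (∀ y ∈ ⁅(⊤ : LieIdeal F L), (⊤ : LieIdeal F L)⁆, IsNilpotent (R y)) ∧
      (∃ y ∈ ⁅(⊤ : LieIdeal F L), (⊤ : LieIdeal F L)⁆, R y ≠ 0)) :=
  stmt19_general hm x a habel hspan α v fi R
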